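/- Let G be a connected finite simple graph on a nonempty vertex set V with Laplacian matrix L, and fix r ∈ ℕ. For each v ∈ V let n_v ∈ ℕ, let A_v be a real r × n_v matrix, and let C : V → ℝ^r. Let f_v : ℝ^{n_v} → ℝ be convex and differentiable for each v, and write x = (x_v)_{v ∈ V}, F(x) = ∑_{v ∈ V} f_v(x_v). Define the Lagrangian 𝓛(x, z, λ) = F(x) + ∑_{v ∈ V} ⟨λ_v, A_v x_v + ∑_{u ∈ V} L_{v,u} · z_u + C_v⟩ for z, λ : V → ℝ^r. Suppose (x*, z*, λ*) with λ*_v ≥ 0 componentwise for all v is a saddle point of 𝓛 over (∏_v ℝ^{n_v}) × (ℝ^r)^V × ((ℝ^r_{≥0})^V), i.e., 𝓛(x*, z*, λ) ≤ 𝓛(x*, z*, λ*) ≤ 𝓛(x, z, λ*) for all x, z and all λ with λ_v ≥ 0 for all v. Then x* is a global minimizer of F over the original coupled feasible set: F(x*) ≤ F(x) for every x satisfying ∑_{v ∈ V} A_v x_v + ∑_{v ∈ V} C_v ≤ 0 componentwise. -/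

import Mathlib

/-!
Testing the first saddle inequality at `λ = 0` and `λ = 2λ*` forces complementary slackness:
the penalty term of the Lagrangian vanishes at the saddle point. For a feasible `x`, the range
of the Laplacian of a connected graph is the space of zero-sum vectors, so `z` can be chosen to
replace every local residual `A v x_v + C v` by their common average, which is `≤ 0` by
feasibility. The penalty at `(x, z)` is then `≤ 0`, and the second saddle inequality gives
`F x* ≤ F x`.
-/

open Matrix Finset

namespace SimpleGraph

variable {V : Type*} [Fintype V] [DecidableEq V] (G : SimpleGraph V) [DecidableRel G.Adj]

theorem sum_lapMatrix_mulVec {R : Type*} [CommRing R] (z : V → R) :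
    ∑ v, (G.lapMatrix R *ᵥ z) v = 0 := by
  have h := dotProduct_mulVec (fun _ => (1 : R)) (G.lapMatrix R) z
  rw [← mulVec_transpose, (G.isSymm_lapMatrix R).eq, lapMatrix_mulVec_const_eq_zero,
    zero_dotProduct] at h
  simpa [dotProduct] using h

theorem finrank_ker_toLin'_lapMatrix_eq_one (hG : G.Connected) :
    Module.finrank ℝ (LinearMap.ker (G.lapMatrix ℝ).toLin') = 1 := by
  rw [← card_connectedComponent_eq_finrank_ker_toLin'_lapMatrix, Fintype.card_eq_one_iff]
  have := hG.preconnected.subsingleton_connectedComponent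
  exact ⟨G.connectedComponentMk hG.nonempty.some, fun c => Subsingleton.elim _ _⟩

theorem range_toLin'_lapMatrix_eq_ker_sum (hG : G.Connected) :
    LinearMap.range (G.lapMatrix ℝ).toLin' = LinearMap.ker (∑ v, LinearMap.proj v) := by
  set σ : (V → ℝ) →ₗ[ℝ] ℝ := ∑ v, LinearMap.proj v
  have hle : LinearMap.range (G.lapMatrix ℝ).toLin' ≤ LinearMap.ker σ := by
    rintro _ ⟨z, rfl⟩
    simpa [σ] using G.sum_lapMatrix_mulVec z
  have hσ : LinearMap.range σ = ⊤ :=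
    LinearMap.range_eq_top.2 fun c => ⟨Pi.single hG.nonempty.some c, by simp [σ]⟩
  have hrankL := LinearMap.finrank_range_add_finrank_ker (G.lapMatrix ℝ).toLin'
  have hrankσ := LinearMap.finrank_range_add_finrank_ker σ
  rw [G.finrank_ker_toLin'_lapMatrix_eq_one hG] at hrankL
  rw [hσ, finrank_top, Module.finrank_self] at hrankσ
  exact Submodule.eq_of_le_of_finrank_eq hle (by omega)

theorem exists_sum_lapMatrix_smul_eq {ι : Type*} (hG : G.Connected) (y : V → ι → ℝ)
    (hy : ∑ v, y v = 0) : ∃ z : V → ι → ℝ, ∀ v, ∑ u, G.lapMatrix ℝ v u • z u = y v := by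
  have hrange : ∀ i, (fun v => y v i) ∈ LinearMap.range (G.lapMatrix ℝ).toLin' := fun i => by
    rw [G.range_toLin'_lapMatrix_eq_ker_sum hG]
    have hyi := congrFun hy i
    rw [Finset.sum_apply] at hyi
    simpa using hyi
  choose z hz using hrange
  refine ⟨fun v i => z i v, fun v => funext fun i => ?_⟩
  simpa [mulVec, dotProduct] using congrFun (hz i) v

theorem exists_add_sum_lapMatrix_smul_eq_average {ι : Type*} (hG : G.Connected)
    (a : V → ι → ℝ) : ∃ z : V → ι → ℝ,
      ∀ v, a v + ∑ u, G.lapMatrix ℝ v u • z u = (Fintype.card V : ℝ)⁻¹ • ∑ w, a w := by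
  have hV : (Fintype.card V : ℝ) ≠ 0 := by
    have := hG.nonempty
    positivity
  obtain ⟨z, hz⟩ := G.exists_sum_lapMatrix_smul_eq hG
    (fun v => (Fintype.card V : ℝ)⁻¹ • ∑ w, a w - a v) (by
      rw [sum_sub_distrib, sum_const, card_univ, ← Nat.cast_smul_eq_nsmul ℝ,
        smul_inv_smul₀ hV, sub_self])
  exact ⟨z, fun v => by rw [hz v, add_sub_cancel]⟩

end SimpleGraph

theorem sum_sum_mul_eq_zero_of_forall_le {V ι : Type*} [Fintype V] [Fintype ι]
    {μ c : V → ι → ℝ} (hμ : ∀ v, 0 ≤ μ v)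
    (h : ∀ ν : V → ι → ℝ, (∀ v, 0 ≤ ν v) →
      ∑ v, ∑ i, ν v i * c v i ≤ ∑ v, ∑ i, μ v i * c v i) :
    ∑ v, ∑ i, μ v i * c v i = 0 := by
  have hnonneg := h 0 fun _ => le_rfl
  have hdouble := h ((2 : ℝ) • μ) fun v => by simpa using smul_nonneg zero_le_two (hμ v)
  simp only [Pi.smul_apply, smul_eq_mul, mul_assoc, ← mul_sum] at hdouble
  simp only [Pi.zero_apply, zero_mul, sum_const_zero] at hnonneg
  linarith

theorem saddle_point_of_decoupled_lagrangian_minimizes_coupled_problem_general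
    {V : Type*} [Fintype V] [DecidableEq V]
    (G : SimpleGraph V) [DecidableRel G.Adj] (hG : G.Connected)
    (r : ℕ) (n : V → ℕ)
    (A : (v : V) → Matrix (Fin r) (Fin (n v)) ℝ)
    (C : V → Fin r → ℝ)
    (f : (v : V) → (Fin (n v) → ℝ) → ℝ)
    (xs : (v : V) → Fin (n v) → ℝ) (zs lams : V → Fin r → ℝ)
    (hlams : ∀ v, 0 ≤ lams v)
    (hsaddle₁ : ∀ lam : V → Fin r → ℝ, (∀ v, 0 ≤ lam v) →
      (∑ v, f v (xs v)) +
        ∑ v, ∑ i, lam v i *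
          ((A v).mulVec (xs v) + (∑ u, (G.lapMatrix ℝ) v u • zs u) + C v) i ≤
      (∑ v, f v (xs v)) +
        ∑ v, ∑ i, lams v i *
          ((A v).mulVec (xs v) + (∑ u, (G.lapMatrix ℝ) v u • zs u) + C v) i)
    (hsaddle₂ : ∀ (x : (v : V) → Fin (n v) → ℝ) (z : V → Fin r → ℝ),
      (∑ v, f v (xs v)) +
        ∑ v, ∑ i, lams v i *
          ((A v).mulVec (xs v) + (∑ u, (G.lapMatrix ℝ) v u • zs u) + C v) i ≤
      (∑ v, f v (x v)) +
        ∑ v, ∑ i, lams v i *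
          ((A v).mulVec (x v) + (∑ u, (G.lapMatrix ℝ) v u • z u) + C v) i) :
    ∀ x : (v : V) → Fin (n v) → ℝ,
      (∑ v, (A v).mulVec (x v)) + (∑ v, C v) ≤ 0 →
      ∑ v, f v (xs v) ≤ ∑ v, f v (x v) := by
  intro x hx
  have hslack := sum_sum_mul_eq_zero_of_forall_le hlams fun lam hlam =>
    (add_le_add_iff_left _).1 (hsaddle₁ lam hlam)
  obtain ⟨z, hz⟩ := G.exists_add_sum_lapMatrix_smul_eq_average hG fun v => A v *ᵥ x v + C v
  have haverage : (Fintype.card V : ℝ)⁻¹ • ∑ v, (A v *ᵥ x v + C v) ≤ 0 := by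
    rw [sum_add_distrib]
    exact smul_nonpos_of_nonneg_of_nonpos (by positivity) hx
  have hpenalty : ∑ v, ∑ i, lams v i *
      (A v *ᵥ x v + ∑ u, G.lapMatrix ℝ v u • z u + C v) i ≤ 0 := by
    refine sum_nonpos fun v _ => sum_nonpos fun i _ => ?_
    rw [add_right_comm, hz v]
    exact mul_nonpos_of_nonneg_of_nonpos (hlams v i) (haverage i)
  linarith [hsaddle₂ x z]

/-- combination of the paper's Theorem 1 and Theorem 2(a).
Let `G` be a connected finite simple graph on a nonempty vertex set `V` with
Laplacian `L`, `r : ℕ`; for each `v` let `A v` be a real `r × n v` matrix,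
`C : V → ℝ^r`, and `f v : ℝ^{n v} → ℝ` convex and differentiable, with
`F x = ∑ v, f v (x v)`. Define the Lagrangian
`𝓛(x, z, λ) = F x + ∑ v, ⟨λ v, A v *ᵥ x v + ∑ u, L v u • z u + C v⟩`.
If `(x*, z*, λ*)` with `λ* v ≥ 0` for all `v` is a saddle point of `𝓛` over
`(∏ v, ℝ^{n v}) × (ℝ^r)^V × ((ℝ^r_{≥0})^V)`, then `x*` globally minimizes `F`
over the coupled feasible set `{x : ∑ v, A v *ᵥ x v + ∑ v, C v ≤ 0}`. -/
theorem saddle_point_of_decoupled_lagrangian_minimizes_coupled_problem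
    {V : Type*} [Fintype V] [Nonempty V] [DecidableEq V]
    (G : SimpleGraph V) [DecidableRel G.Adj] (hG : G.Connected)
    (r : ℕ) (n : V → ℕ)
    (A : (v : V) → Matrix (Fin r) (Fin (n v)) ℝ)
    (C : V → Fin r → ℝ)
    (f : (v : V) → (Fin (n v) → ℝ) → ℝ)
    (hf : ∀ v, ConvexOn ℝ Set.univ (f v))
    (hfd : ∀ v, Differentiable ℝ (f v))
    (xs : (v : V) → Fin (n v) → ℝ) (zs lams : V → Fin r → ℝ)
    (hlams : ∀ v, 0 ≤ lams v)
    (hsaddle₁ : ∀ lam : V → Fin r → ℝ, (∀ v, 0 ≤ lam v) →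
      (∑ v, f v (xs v)) +
        ∑ v, ∑ i, lam v i *
          ((A v).mulVec (xs v) + (∑ u, (G.lapMatrix ℝ) v u • zs u) + C v) i ≤
      (∑ v, f v (xs v)) +
        ∑ v, ∑ i, lams v i *
          ((A v).mulVec (xs v) + (∑ u, (G.lapMatrix ℝ) v u • zs u) + C v) i)
    (hsaddle₂ : ∀ (x : (v : V) → Fin (n v) → ℝ) (z : V → Fin r → ℝ),
      (∑ v, f v (xs v)) +
        ∑ v, ∑ i, lams v i *
          ((A v).mulVec (xs v) + (∑ u, (G.lapMatrix ℝ) v u • zs u) + C v) i ≤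
      (∑ v, f v (x v)) +
        ∑ v, ∑ i, lams v i *
          ((A v).mulVec (x v) + (∑ u, (G.lapMatrix ℝ) v u • z u) + C v) i) :
    ∀ x : (v : V) → Fin (n v) → ℝ,
      (∑ v, (A v).mulVec (x v)) + (∑ v, C v) ≤ 0 →
      ∑ v, f v (xs v) ≤ ∑ v, f v (x v) :=
  saddle_point_of_decoupled_lagrangian_minimizes_coupled_problem_general G hG r n A C f xs zs lams
    hlams hsaddle₁ hsaddle₂
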